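/- Let G be a group, A a finite nonempty subset with |A²| ≤ K|A| (K ≥ 1), and k a positive integer. Then there exists a symmetric neighbourhood of the identity S (1 ∈ S, S = S⁻¹) with S^k ⊆ A²A⁻² and |S| ≥ exp(-K^{Ck})|A| for some absolute constant C > 0. -/

import Mathlib

open Finset Pointwise

/-
For finite `X`, the symmetry set `S = {g : |gX ∩ X| ≥ k/(k+1)·|X|}` contains `1`, is symmetric,
and satisfies `S^k ⊆ XX⁻¹` because `g ↦ |X| - |gX ∩ X|` is subadditive. Take `X = BA` with
`B ⊆ A`, starting from `B = A`. At least `|B|/2` differences `x ∈ BB⁻¹` are popular, i.e.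
`|B ∩ xB| ≥ |B|²/(2|BB⁻¹|)`. If they all lie in `S`, then `|S| ≥ |B|/2`. Otherwise pass to
`B' = B ∩ xB` for a popular `x ∉ S`: Ruzsa's triangle inequality gives `|BB⁻¹| ≤ K²|A|`, so the
density of `B'` in `A` is at least the square of that of `B` divided by `2K²`, while
`|B'A| ≤ |xX ∩ X| < k/(k+1)·|BA|`. As `|BA|` starts at most `K|A|` and never drops below `|A|`,
this happens at most `n = ⌊(k+1) log K⌋` times, so `|S| ≥ (2K²)^(-2^n)|A|`, and `2^n ≤ K^(k+1)`
turns this into `|S| ≥ exp(-K^(4k))|A|`.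
-/

lemma pow_mul_lt_pow_mul_of_succ_mul_lt {k m a b c : ℕ} (h : (k + 1) * a < k * b)
    (hb : k ^ (m + 1) * b < (k + 1) ^ (m + 1) * c) : k ^ m * a < (k + 1) ^ m * c := by
  refine Nat.lt_of_mul_lt_mul_left (a := k + 1) ?_
  calc (k + 1) * (k ^ m * a) ≤ k ^ m * (k * b) := by rw [mul_left_comm]; gcongr
    _ = k ^ (m + 1) * b := by ring
    _ < (k + 1) ^ (m + 1) * c := hb
    _ = (k + 1) * ((k + 1) ^ m * c) := by ring

lemma mul_pow_lt_succ_pow {k m : ℕ} (hk : 0 < k) {K : ℝ} (hK : 0 < K)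
    (h : (k + 1) * Real.log K < m) : K * k ^ m < (k + 1) ^ m := by
  have hk' : (0 : ℝ) < k := by exact_mod_cast hk
  have h' : Real.log K < m / (k + 1) := by rw [lt_div_iff₀ (by positivity)]; linarith
  have hstep : 1 / ((k : ℝ) + 1) ≤ Real.log (k + 1) - Real.log k := by
    rw [← Real.log_div (by positivity) hk'.ne']
    convert Real.one_sub_inv_le_log_of_pos (x := ((k : ℝ) + 1) / k) (by positivity) using 1
    field_simp
    ring
  rw [← Real.log_lt_log_iff (by positivity) (by positivity), Real.log_mul hK.ne' (by positivity),
    Real.log_pow, Real.log_pow]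
  calc Real.log K + m * Real.log k < m / (k + 1) + m * Real.log k := by gcongr
    _ ≤ m * (Real.log (k + 1) - Real.log k) + m * Real.log k := by
        rw [div_eq_mul_one_div]; gcongr
    _ = m * Real.log (k + 1) := by ring

lemma two_pow_floor_le {k : ℕ} {K : ℝ} (hK : 1 ≤ K) :
    (2 : ℝ) ^ ⌊(k + 1) * Real.log K⌋₊ ≤ K ^ (k + 1) := by
  have hL : 0 ≤ ((k : ℝ) + 1) * Real.log K := mul_nonneg (by positivity) (Real.log_nonneg hK)
  calc (2 : ℝ) ^ ⌊(k + 1) * Real.log K⌋₊ ≤ Real.exp 1 ^ ⌊(k + 1) * Real.log K⌋₊ := by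
        gcongr; linarith [Real.add_one_le_exp 1]
    _ = Real.exp ⌊(k + 1) * Real.log K⌋₊ := by rw [← Real.exp_nat_mul, mul_one]
    _ ≤ Real.exp ((k + 1) * Real.log K) := by gcongr; exact Nat.floor_le hL
    _ = K ^ (k + 1) := by
        rw [← Real.exp_log (pow_pos (by linarith) (k + 1)), Real.log_pow]
        push_cast
        rfl

lemma two_mul_sq_pow_le_exp {k n : ℕ} (hk : 0 < k) {K : ℝ} (hK : 1 ≤ K)
    (hn : (2 : ℝ) ^ n ≤ K ^ (k + 1)) : (2 * K ^ 2) ^ 2 ^ n ≤ Real.exp (K ^ (4 * k)) := by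
  have hlog : Real.log (2 * K ^ 2) ≤ K ^ 2 := by
    rw [Real.log_mul two_ne_zero (by positivity)]
    linarith [Real.log_two_lt_d9, Real.log_le_sub_one_of_pos (x := K ^ 2) (by positivity)]
  calc (2 * K ^ 2) ^ 2 ^ n = Real.exp (2 ^ n * Real.log (2 * K ^ 2)) := by
        rw [← Nat.cast_ofNat, ← Nat.cast_pow, Real.exp_nat_mul, Real.exp_log (by positivity)]
    _ ≤ Real.exp (K ^ (k + 1) * K ^ 2) :=
        Real.exp_le_exp.2 (mul_le_mul hn hlog (Real.log_nonneg (by nlinarith)) (by positivity))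
    _ ≤ Real.exp (K ^ (4 * k)) := by
        rw [← pow_add]; gcongr; omega

lemma density_pow_mul_card_le {α : Type*} {A B : Finset α} {K : ℝ} (hK : 1 ≤ K) (hBA : B ⊆ A)
    (n : ℕ) : ((#B : ℝ) / (2 * K ^ 2 * #A)) ^ 2 ^ n * #A ≤ #B / 2 := by
  obtain rfl | hA := A.eq_empty_or_nonempty
  · simp; positivity
  have hK2 : 1 ≤ K ^ 2 := one_le_pow₀ hK
  have hA0 : (0 : ℝ) < #A := by exact_mod_cast hA.card_pos
  have hBA' : (#B : ℝ) ≤ #A := by exact_mod_cast card_le_card hBA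
  calc ((#B : ℝ) / (2 * K ^ 2 * #A)) ^ 2 ^ n * #A
      ≤ (#B : ℝ) / (2 * K ^ 2 * #A) * #A := by
        gcongr
        refine pow_le_of_le_one (by positivity) ?_ (by positivity)
        rw [div_le_one (by positivity)]
        nlinarith
    _ = #B / (2 * K ^ 2) := by field_simp
    _ ≤ #B / 2 := by gcongr; linarith

section SymmetrySet

variable {G : Type*} [Group G] [DecidableEq G] {X : Finset G} {g : G} {k : ℕ}

lemma mem_div_of_smul_inter_nonempty (h : (g • X ∩ X).Nonempty) : g ∈ X / X := by
  obtain ⟨y, hy⟩ := h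
  obtain ⟨hgy, hy⟩ := mem_inter.1 hy
  obtain ⟨x, hx, rfl⟩ := mem_smul_finset.1 hgy
  simpa using div_mem_div hy hx

lemma card_inv_smul_inter (g : G) (X : Finset G) : #(g⁻¹ • X ∩ X) = #(g • X ∩ X) := by
  rw [← card_smul_finset g, smul_finset_inter, smul_inv_smul, inter_comm]

lemma card_smul_inter_add_card_smul_inter_le (u v : G) (X : Finset G) :
    #(u • X ∩ X) + #(v • X ∩ X) ≤ #((u * v) • X ∩ X) + #X := by
  have hv : #(v • X ∩ X) = #((u * v) • X ∩ u • X) := by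
    rw [mul_smul, ← smul_finset_inter, card_smul_finset]
  calc #(u • X ∩ X) + #(v • X ∩ X)
      = #(((u * v) • X ∩ u • X) ∪ (u • X ∩ X)) + #(((u * v) • X ∩ u • X) ∩ (u • X ∩ X)) := by
        rw [card_union_add_card_inter, hv, add_comm]
    _ ≤ #(u • X) + #((u * v) • X ∩ X) :=
        add_le_add (card_le_card (union_subset inter_subset_right inter_subset_left))
          (card_le_card (inter_subset_inter inter_subset_left inter_subset_right))
    _ = #((u * v) • X ∩ X) + #X := by rw [card_smul_finset, add_comm]

/-- Sanders's symmetry set `Sym_{k/(k+1)}(X)`. -/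
def symmetrySet (k : ℕ) (X : Finset G) : Finset G :=
  {g ∈ X / X | k * #X ≤ (k + 1) * #(g • X ∩ X)}

lemma mem_symmetrySet :
    g ∈ symmetrySet k X ↔ g ∈ X / X ∧ k * #X ≤ (k + 1) * #(g • X ∩ X) :=
  mem_filter

lemma one_mem_symmetrySet (hX : X.Nonempty) : 1 ∈ symmetrySet k X := by
  rw [mem_symmetrySet, one_smul, inter_self]
  exact ⟨hX.one_mem_div, by gcongr; omega⟩

lemma inv_symmetrySet : (symmetrySet k X)⁻¹ = symmetrySet k X := by
  ext g
  rw [mem_inv', mem_symmetrySet, mem_symmetrySet, card_inv_smul_inter, ← mem_inv', inv_div]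

lemma le_card_smul_inter_of_mem_pow {j : ℕ} (hg : g ∈ symmetrySet k X ^ j) :
    (k + 1) * #X ≤ (k + 1) * #(g • X ∩ X) + j * #X := by
  induction j generalizing g with
  | zero =>
    rw [pow_zero, mem_one] at hg
    simp [hg]
  | succ j ih =>
    obtain ⟨u, hu, v, hv, rfl⟩ := mem_mul.1 (pow_succ (symmetrySet k X) j ▸ hg)
    have := card_smul_inter_add_card_smul_inter_le u v X
    have := ih hu
    have := (mem_symmetrySet.1 hv).2
    nlinarith

lemma pow_symmetrySet_subset (hX : X.Nonempty) : symmetrySet k X ^ k ⊆ X / X := by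
  intro g hg
  refine mem_div_of_smul_inter_nonempty (card_pos.1 (Nat.pos_of_ne_zero fun h0 => ?_))
  have := le_card_smul_inter_of_mem_pow hg
  rw [h0] at this
  have := hX.card_pos
  nlinarith

lemma sum_card_inter_smul (B : Finset G) : ∑ x ∈ B / B, #(B ∩ x • B) = #B * #B := by
  rw [← card_product, card_eq_sum_card_fiberwise (f := fun ab => ab.1 / ab.2)
    fun ab hab => div_mem_div (mem_product.1 hab).1 (mem_product.1 hab).2]
  exact sum_congr rfl fun x _ => by rw [card_div_eq, card_inter_smul]

lemma card_le_two_mul_card_popular (B : Finset G) :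
    #B ≤ 2 * #{x ∈ B / B | #B ^ 2 ≤ 2 * #(B / B) * #(B ∩ x • B)} := by
  obtain rfl | hB := B.eq_empty_or_nonempty
  · simp
  have hsplit := sum_filter_add_sum_filter_not (B / B)
    (fun x => #B ^ 2 ≤ 2 * #(B / B) * #(B ∩ x • B)) fun x => #(B ∩ x • B)
  rw [sum_card_inter_smul] at hsplit
  set T := {x ∈ B / B | #B ^ 2 ≤ 2 * #(B / B) * #(B ∩ x • B)}
  set N := {x ∈ B / B | ¬ #B ^ 2 ≤ 2 * #(B / B) * #(B ∩ x • B)}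
  have hT : ∑ x ∈ T, #(B ∩ x • B) ≤ #T * #B := by
    simpa using sum_le_card_nsmul T _ _ fun x _ => card_le_card inter_subset_left
  have hN : 2 * ∑ x ∈ N, #(B ∩ x • B) ≤ #B ^ 2 := by
    refine Nat.le_of_mul_le_mul_left ?_ (hB.div hB).card_pos
    calc #(B / B) * (2 * ∑ x ∈ N, #(B ∩ x • B))
        = ∑ x ∈ N, 2 * #(B / B) * #(B ∩ x • B) := by rw [mul_sum, mul_sum]; ring_nf
      _ ≤ ∑ _x ∈ N, #B ^ 2 := sum_le_sum fun x hx => (not_le.1 (mem_filter.1 hx).2).le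
      _ ≤ #(B / B) * #B ^ 2 := by
        rw [sum_const, smul_eq_mul]; gcongr; exact filter_subset _ _
  have := hB.card_pos
  nlinarith

lemma div_subset_mul_div_mul {A : Finset G} (hA : A.Nonempty) (B : Finset G) :
    B / B ⊆ B * A / (B * A) := by
  intro x hx
  obtain ⟨b, hb, c, hc, rfl⟩ := mem_div.1 hx
  obtain ⟨a, ha⟩ := hA
  simpa using div_mem_div (mul_mem_mul hb ha) (mul_mem_mul hc ha)

lemma card_le_two_mul_card_symmetrySet_or_exists {A : Finset G} (hA : A.Nonempty)
    (k : ℕ) (B : Finset G) :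
    #B ≤ 2 * #(symmetrySet k (B * A)) ∨
      ∃ x : G, #B ^ 2 ≤ 2 * #(B / B) * #(B ∩ x • B) ∧
        (k + 1) * #((B ∩ x • B) * A) < k * #(B * A) := by
  by_cases h : {x ∈ B / B | #B ^ 2 ≤ 2 * #(B / B) * #(B ∩ x • B)} ⊆ symmetrySet k (B * A)
  · exact .inl ((card_le_two_mul_card_popular B).trans (by gcongr))
  obtain ⟨x, hx, hxS⟩ := not_subset.1 h
  obtain ⟨hxB, hpop⟩ := mem_filter.1 hx
  have hsub : (B ∩ x • B) * A ⊆ x • (B * A) ∩ (B * A) :=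
    subset_inter (smul_mul_assoc x B A ▸ mul_subset_mul_right inter_subset_right)
      (mul_subset_mul_right inter_subset_left)
  refine .inr ⟨x, hpop, (Nat.mul_le_mul_left _ (card_le_card hsub)).trans_lt ?_⟩
  exact not_le.1 fun hle => hxS (mem_symmetrySet.2 ⟨div_subset_mul_div_mul hA B hxB, hle⟩)

lemma card_div_self_le {A B : Finset G} {K : ℝ} (hA : A.Nonempty) (hBA : B ⊆ A)
    (hAA : (#(A * A) : ℝ) ≤ K * #A) : (#(B / B) : ℝ) ≤ K ^ 2 * #A := by
  have hA0 : (0 : ℝ) < #A := by exact_mod_cast hA.card_pos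
  have hruzsa : (#(B / B) * #A : ℝ) ≤ #(B * A) * #(B * A) := by
    exact_mod_cast ruzsa_triangle_inequality_div_mul_mul B A B
  have hBA' : (#(B * A) : ℝ) ≤ K * #A :=
    le_trans (by exact_mod_cast card_le_card (mul_subset_mul_right hBA)) hAA
  have : (#(B / B) * #A : ℝ) ≤ K ^ 2 * #A * #A := by
    nlinarith [(Nat.cast_nonneg _ : (0 : ℝ) ≤ #(B * A))]
  exact le_of_mul_le_mul_right this hA0

lemma density_sq_le {A B B' : Finset G} {K : ℝ} (hA : A.Nonempty) (hBA : B ⊆ A)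
    (hAA : (#(A * A) : ℝ) ≤ K * #A) (hdense : #B ^ 2 ≤ 2 * #(B / B) * #B') :
    ((#B : ℝ) / (2 * K ^ 2 * #A)) ^ 2 ≤ #B' / (2 * K ^ 2 * #A) := by
  have hdense' : (#B : ℝ) ^ 2 ≤ 2 * #(B / B) * #B' := by exact_mod_cast hdense
  have hB'0 : (0 : ℝ) ≤ #B' := Nat.cast_nonneg _
  have : (#B : ℝ) ^ 2 ≤ 2 * K ^ 2 * #A * #B' := by
    nlinarith [card_div_self_le hA hBA hAA]
  calc ((#B : ℝ) / (2 * K ^ 2 * #A)) ^ 2 = #B ^ 2 / (2 * K ^ 2 * #A) ^ 2 := div_pow ..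
    _ ≤ 2 * K ^ 2 * #A * #B' / (2 * K ^ 2 * #A) ^ 2 := by gcongr
    _ = #B' / (2 * K ^ 2 * #A) := by field_simp

lemma exists_le_card_symmetrySet {A : Finset G} {K : ℝ}
    (hA : A.Nonempty) (hAA : (#(A * A) : ℝ) ≤ K * #A) (k n : ℕ) (B : Finset G) (hBA : B ⊆ A)
    (hB : B.Nonempty) (hfuel : k ^ (n + 1) * #(B * A) < (k + 1) ^ (n + 1) * #A) :
    ∃ X ⊆ A * A, X.Nonempty ∧
      ((#B : ℝ) / (2 * K ^ 2 * #A)) ^ 2 ^ n * #A ≤ #(symmetrySet k X) := by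
  have hK : 1 ≤ K := by
    have : (#A : ℝ) ≤ #(A * A) := by exact_mod_cast card_le_card_mul_left hA
    have : (0 : ℝ) < #A := by exact_mod_cast hA.card_pos
    nlinarith
  induction n using Nat.strong_induction_on generalizing B with
  | _ n ih =>
  rcases card_le_two_mul_card_symmetrySet_or_exists hA k B with hS | ⟨x, hdense, hshrink⟩
  · refine ⟨B * A, mul_subset_mul_right hBA, hB.mul hA, ?_⟩
    have hS' : (#B : ℝ) ≤ 2 * #(symmetrySet k (B * A)) := by exact_mod_cast hS
    linarith [density_pow_mul_card_le hK hBA n]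
  have hB' : (B ∩ x • B).Nonempty :=
    card_pos.1 (Nat.pos_of_mul_pos_left ((pow_pos hB.card_pos 2).trans_le hdense))
  have hfuel' := pow_mul_lt_pow_mul_of_succ_mul_lt hshrink hfuel
  obtain _ | m := n
  · exact absurd (card_le_card_mul_left hB') (by simpa using hfuel')
  obtain ⟨X, hXA, hX, hcard⟩ :=
    ih m (by omega) (B ∩ x • B) (inter_subset_left.trans hBA) hB' hfuel'
  refine ⟨X, hXA, hX, le_trans ?_ hcard⟩
  rw [pow_succ' 2 m, pow_mul]
  gcongr
  exact density_sq_le hA hBA hAA hdense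

end SymmetrySet

theorem stmt13 : ∃ C : ℝ, 0 < C ∧
    ∀ (G : Type) [Group G] [DecidableEq G] (A : Finset G) (K : ℝ) (k : ℕ),
      A.Nonempty → 1 ≤ K → ((A * A).card : ℝ) ≤ K * A.card → 0 < k →
      ∃ S : Finset G, (1 : G) ∈ S ∧ S⁻¹ = S ∧
        S ^ k ⊆ A * A * (A * A)⁻¹ ∧
        Real.exp (-(K ^ (C * k))) * A.card ≤ (S.card : ℝ) := by
  refine ⟨4, by norm_num, fun G _ _ A K k hA hK hAA hk => ?_⟩
  set n := ⌊(k + 1) * Real.log K⌋₊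
  have hfuel : k ^ (n + 1) * #(A * A) < (k + 1) ^ (n + 1) * #A := by
    have hA0 : (0 : ℝ) < #A := by exact_mod_cast hA.card_pos
    have hK' := mul_pow_lt_succ_pow (m := n + 1) hk (by linarith)
      (by push_cast; exact Nat.lt_floor_add_one _)
    exact_mod_cast (show (k : ℝ) ^ (n + 1) * #(A * A) < (k + 1) ^ (n + 1) * #A by
      calc (k : ℝ) ^ (n + 1) * #(A * A) ≤ k ^ (n + 1) * (K * #A) := by gcongr
        _ = K * k ^ (n + 1) * #A := by ring
        _ < (k + 1) ^ (n + 1) * #A := by gcongr)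
  obtain ⟨X, hXA, hX, hS⟩ := exists_le_card_symmetrySet hA hAA k n A subset_rfl hA hfuel
  refine ⟨symmetrySet k X, one_mem_symmetrySet hX, inv_symmetrySet,
    (pow_symmetrySet_subset hX).trans ?_, le_trans ?_ hS⟩
  · rw [← div_eq_mul_inv]
    exact div_subset_div hXA hXA
  have hA0 : (#A : ℝ) ≠ 0 := by exact_mod_cast hA.card_pos.ne'
  rw [div_mul_cancel_right₀ hA0, inv_pow, Real.exp_neg, show (4 : ℝ) * k = (4 * k : ℕ) by simp,
    Real.rpow_natCast]
  gcongr
  exact two_mul_sq_pow_le_exp hk hK (two_pow_floor_le hK)
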